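/- For every increasing function g ∈ ω^ω there is a gauge function f such that N^f = {A ⊆ 2^ω : ℋ^f(A) = 0} is contained in the Yorioka ideal I_g. -/

import Mathlib

open MeasureTheory Set
open scoped ENNReal

/-- The Cantor space `2^ω = ℕ → Bool` carries the metric
`d(x,y) = 2^{-min{n : x n ≠ y n}}` (and `d(x,x) = 0`). -/
noncomputable local instance cantorMetric : MetricSpace (ℕ → Bool) := PiNat.metricSpace

/-- A gauge function: a nondecreasing function `f : [0,∞) → [0,∞)` with `f 0 = 0` and
`lim_{x → 0⁺} f x = 0`. -/
structure IsGauge (f : ℝ → ℝ) : Prop where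
  nonneg : ∀ x : ℝ, 0 ≤ x → 0 ≤ f x
  zero : f 0 = 0
  mono : MonotoneOn f (Ici 0)
  tendsto_zero : Filter.Tendsto f (nhdsWithin 0 (Ioi 0)) (nhds 0)

/-- The value `f(diam)` of a gauge function `f` on an extended-real diameter
(infinite diameters are sent to `∞`). -/
noncomputable def gaugeFn (f : ℝ → ℝ) : ℝ≥0∞ → ℝ≥0∞ := fun d =>
  if d = ∞ then ∞ else ENNReal.ofReal (f d.toReal)

/-- The Hausdorff (outer) measure `ℋ^f` with gauge function `f`. -/
noncomputable def gaugeMeasure {X : Type*} [EMetricSpace X] (f : ℝ → ℝ) : OuterMeasure X :=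
  OuterMeasure.mkMetric (gaugeFn f)

/-- `s` is an initial segment of `x : 2^ω`. -/
def InitSeg (s : List Bool) (x : ℕ → Bool) : Prop :=
  ∀ i : ℕ, (hi : i < s.length) → s.get ⟨i, hi⟩ = x i

/-- `[σ]_∞` : the set of `x ∈ 2^ω` having `σ n` as an initial segment for infinitely
many `n`. -/
def limsupCyl (σ : ℕ → List Bool) : Set (ℕ → Bool) :=
  {x | ∃ᶠ n in Filter.atTop, InitSeg (σ n) x}

/-- The ideal `J_g = {A ⊆ 2^ω : ∃ σ, ht σ = g and A ⊆ [σ]_∞}`. -/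
def Jg (g : ℕ → ℕ) : Set (Set (ℕ → Bool)) :=
  {A | ∃ σ : ℕ → List Bool, (∀ n, (σ n).length = g n) ∧ A ⊆ limsupCyl σ}

/-- `f ≪ g` iff for every `k`, `f (n^k) ≤ g n` for all but finitely many `n`. -/
def FastBelow (f g : ℕ → ℕ) : Prop := ∀ k : ℕ, ∀ᶠ n in Filter.atTop, f (n ^ k) ≤ g n

/-- The Yorioka ideal `I_f = ⋃_{g ≫ f} J_g`. -/
def Yorioka (f : ℕ → ℕ) : Set (Set (ℕ → Bool)) :=
  {A | ∃ g : ℕ → ℕ, FastBelow f g ∧ A ∈ Jg g}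

/-!
Take `f(x) = 2⁻¹ ^ level(m)` for `2⁻¹ ^ (m + 1) < x ≤ 2⁻¹ ^ m`, where the level grows so slowly
that `g ((2 ^ ℓ) ^ 2 ^ ℓ) ≤ m` at level `ℓ`, and give a cylinder of length `m` the weight
`2⁻¹ ^ level(m)`. In `2^ω` a set of diameter `x` lies in a cylinder of length `m`, so if
`ℋ^f(A) = 0` then for each `k` the set `A` is covered by cylinders of total weight
`≤ 2⁻¹ ^ (k + 1)`. Together these countably many cylinders weigh at most `1`, so at most `2 ^ ℓ`
of them have level `≤ ℓ`; ranking them by level places a cylinder of level `ℓ` at a position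
`n < 2 ^ ℓ`, where its length is at least `g (n ^ n) ≥ g (n ^ k)` for `n ≥ k`. Each point of `A`
lies in a cylinder of every cover, hence in infinitely many of the ranked ones.
-/

open Filter Topology

theorem MeasureTheory.OuterMeasure.exists_cover_tsum_lt_of_mkMetric'_eq_zero {X : Type*}
    [EMetricSpace X] {m : Set X → ℝ≥0∞} {A : Set X} (hA : mkMetric' m A = 0) {ε : ℝ≥0∞}
    (hε : ε ≠ 0) : ∃ t : ℕ → Set X, A ⊆ ⋃ i, t i ∧ ∑' i, ⨆ _ : (t i).Nonempty, m (t i) < ε := by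
  have hpre : mkMetric'.pre m ∞ A < ε := by
    have hle : mkMetric'.pre m ∞ ≤ mkMetric' m :=
      le_iSup₂ (f := fun r (_ : 0 < r) => mkMetric'.pre m r) ∞ (by simp)
    exact (hle A).trans_lt (hA ▸ pos_iff_ne_zero.2 hε)
  rw [mkMetric'.pre, boundedBy_apply] at hpre
  obtain ⟨t, ht⟩ := iInf_lt_iff.1 hpre
  obtain ⟨hAt, hsum⟩ := iInf_lt_iff.1 ht
  simp only [extend, le_top, iInf_pos] at hsum
  exact ⟨t, hAt, hsum⟩

theorem exists_injective_lt_ncard_setOf_le {ι : Type*} [LinearOrder ι] (w : ι → ℕ)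
    (hfin : ∀ ℓ, {i | w i ≤ ℓ}.Finite) :
    ∃ p : ι → ℕ, Function.Injective p ∧ ∀ j, p j < {i | w i ≤ w j}.ncard := by
  let key : ι → ℕ ×ₗ ι := fun i => toLex (w i, i)
  have hkey : Function.Injective key := fun i j h => by simp_all [key]
  have hbelow : ∀ j, {i | key i < key j} ⊆ {i | w i ≤ w j} := by
    intro j i hi
    rcases Prod.Lex.lt_iff.1 hi with h | ⟨h, -⟩
    exacts [h.le, h.le]
  have hrank : ∀ {i j}, key i < key j → {k | key k < key i}.ncard < {k | key k < key j}.ncard :=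
    fun {i j} hij => Set.ncard_lt_ncard
      ⟨fun k hk => lt_trans hk hij, fun h => lt_irrefl (key i) (h hij)⟩
      ((hfin (w j)).subset (hbelow j))
  refine ⟨fun j => {i | key i < key j}.ncard, fun i j hij => ?_, fun j => ?_⟩
  · by_contra hne
    rcases lt_or_gt_of_ne (hkey.ne hne) with h | h
    · exact (hrank h).ne hij
    · exact (hrank h).ne' hij
  · exact Set.ncard_lt_ncard ⟨hbelow j, fun h => lt_irrefl (key j) (h (le_refl (w j)))⟩ (hfin _)

theorem ENNReal.ncard_le_two_pow_of_tsum_le_one {ι : Type*} {a : ι → ℝ≥0∞}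
    (h : ∑' i, a i ≤ 1) (ℓ : ℕ) :
    {i | 2⁻¹ ^ ℓ ≤ a i}.Finite ∧ {i | 2⁻¹ ^ ℓ ≤ a i}.ncard ≤ 2 ^ ℓ := by
  obtain ⟨hfin, hcard⟩ := ENNReal.finset_card_const_le_le_of_tsum_le ENNReal.one_ne_top h
    (pow_ne_zero ℓ (ENNReal.inv_ne_zero.2 (ENNReal.ofNat_ne_top (n := 2))))
  refine ⟨hfin, ?_⟩
  rw [Set.ncard_eq_toFinset_card _ hfin]
  have h2 : (1 : ℝ≥0∞) / 2⁻¹ ^ ℓ = 2 ^ ℓ := by rw [one_div, ← ENNReal.inv_pow, inv_inv]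
  exact_mod_cast hcard.trans h2.le

theorem Nat.frequently_mem_unpair_of_forall_subset_iUnion {α : Type*} {A : Set α}
    {C : ℕ → ℕ → Set α} (hC : ∀ k, A ⊆ ⋃ i, C k i) :
    A ⊆ {y | ∃ᶠ j in atTop, y ∈ C (Nat.unpair j).1 (Nat.unpair j).2} := by
  intro y hy
  choose i hi using fun k => mem_iUnion.1 (hC k hy)
  have hpair : Tendsto (fun k => Nat.pair k (i k)) atTop atTop :=
    tendsto_atTop_mono (fun k => Nat.left_le_pair k (i k)) tendsto_id
  exact hpair.frequently (Frequently.of_forall fun k => by simpa using hi k)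

def prefixList (x : ℕ → Bool) (m : ℕ) : List Bool := List.ofFn fun i : Fin m => x i

theorem initSeg_prefixList_iff {x y : ℕ → Bool} {m : ℕ} :
    InitSeg (prefixList x m) y ↔ y ∈ PiNat.cylinder x m := by
  simp [InitSeg, prefixList, PiNat.mem_cylinder_iff, eq_comm]

theorem exists_limsupCyl_superset_of_injective {T : ℕ → ℕ} (x : ℕ → ℕ → Bool) (m p : ℕ → ℕ)
    (hp : Function.Injective p) (hT : ∀ j, T (p j) ≤ m j) :
    ∃ σ : ℕ → List Bool, (∀ n, T n ≤ (σ n).length) ∧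
      {y | ∃ᶠ j in atTop, y ∈ PiNat.cylinder (x j) (m j)} ⊆ limsupCyl σ := by
  classical
  let σ : ℕ → List Bool := fun n =>
    if h : ∃ j, p j = n then prefixList (x h.choose) (m h.choose) else List.replicate (T n) true
  have hσ : ∀ j, σ (p j) = prefixList (x j) (m j) := by
    intro j
    have h : ∃ j', p j' = p j := ⟨j, rfl⟩
    simp only [σ, dif_pos h, hp h.choose_spec]
  refine ⟨σ, fun n => ?_, fun y hy => ?_⟩
  · by_cases h : ∃ j, p j = n
    · obtain ⟨j, rfl⟩ := h
      simpa [hσ, prefixList] using hT j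
    · simp [σ, dif_neg h]
  · refine hp.nat_tendsto_atTop.frequently (hy.mono fun j hj => ?_)
    rw [hσ, initSeg_prefixList_iff]
    exact hj

theorem fastBelow_of_le {g h : ℕ → ℕ} (hg : Monotone g) (hh : ∀ n, g (n ^ n) ≤ h n) :
    FastBelow g h := fun k => by
  filter_upwards [eventually_ge_atTop (max k 1)] with n hn
  exact (hg (Nat.pow_le_pow_right (by omega) (by omega))).trans (hh n)

namespace YoriokaGauge

variable (g : ℕ → ℕ)

/-- Level `ℓ` starts at length `g (n ^ n)` for `n = 2 ^ ℓ`, the number of cylinders of level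
`≤ ℓ` that a family of total weight `≤ 1` can contain. -/
def threshold (ℓ : ℕ) : ℕ := g ((2 ^ ℓ) ^ 2 ^ ℓ)

def level (m : ℕ) : ℕ := Nat.findGreatest (fun ℓ => threshold g ℓ ≤ m) m

noncomputable def weight (m : ℕ) : ℝ≥0∞ := 2⁻¹ ^ level g m

/-- The largest `m` with `x ≤ 2⁻¹ ^ m`, for `0 < x ≤ 1`. -/
noncomputable def precision (x : ℝ) : ℕ := Nat.log 2 ⌊x⁻¹⌋₊

noncomputable def gauge (x : ℝ) : ℝ := if x ≤ 0 then 0 else 2⁻¹ ^ level g (precision x)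

theorem level_mono : Monotone (level g) := fun _ _ h =>
  Nat.findGreatest_mono (fun _ hℓ => hℓ.trans h) h

theorem tendsto_level : Tendsto (level g) atTop atTop :=
  tendsto_atTop_atTop.2 fun ℓ => ⟨max ℓ (threshold g ℓ), fun _ hm =>
    Nat.le_findGreatest (le_of_max_le_left hm) (le_of_max_le_right hm)⟩

theorem threshold_level_le {m : ℕ} (h : level g m ≠ 0) : threshold g (level g m) ≤ m :=
  Nat.findGreatest_of_ne_zero (P := fun ℓ => threshold g ℓ ≤ m) (n := m) rfl h

theorem level_ne_zero_of_weight_lt_one {m : ℕ} (h : weight g m < 1) : level g m ≠ 0 := by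
  intro h0
  simp [weight, h0] at h

theorem tendsto_weight : Tendsto (weight g) atTop (𝓝 0) :=
  (ENNReal.tendsto_pow_atTop_nhds_zero_of_lt_one (by norm_num)).comp (tendsto_level g)

theorem precision_anti {x y : ℝ} (hx : 0 < x) (hxy : x ≤ y) : precision y ≤ precision x :=
  Nat.log_mono_right (Nat.floor_le_floor (inv_anti₀ hx hxy))

theorem le_two_inv_pow_precision {x : ℝ} (hx : 0 < x) (hx1 : x ≤ 1) :
    x ≤ 2⁻¹ ^ precision x := by
  have hfloor : ⌊x⁻¹⌋₊ ≠ 0 := (Nat.floor_pos.2 ((one_le_inv₀ hx).2 hx1)).ne'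
  have h2 : (2 : ℝ) ^ precision x ≤ x⁻¹ :=
    calc (2 : ℝ) ^ precision x = ((2 ^ precision x : ℕ) : ℝ) := by push_cast; rfl
      _ ≤ ⌊x⁻¹⌋₊ := by exact_mod_cast Nat.pow_log_le_self 2 hfloor
      _ ≤ x⁻¹ := Nat.floor_le (inv_nonneg.2 hx.le)
  rw [inv_pow]
  exact (le_inv_comm₀ (by positivity) hx).1 h2

theorem tendsto_precision : Tendsto precision (𝓝[>] 0) atTop :=
  (tendsto_atTop_atTop_of_monotone (fun _ _ h => Nat.log_mono_right h)
    fun n => ⟨2 ^ n, (Nat.log_pow one_lt_two n).ge⟩).comp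
    (tendsto_nat_floor_atTop.comp tendsto_inv_nhdsGT_zero)

theorem gauge_nonneg (x : ℝ) : 0 ≤ gauge g x := by
  unfold gauge
  split_ifs <;> positivity

theorem isGauge_gauge : IsGauge (gauge g) where
  nonneg x _ := gauge_nonneg g x
  zero := if_pos le_rfl
  mono x hx y _ hxy := by
    rcases (mem_Ici.1 hx).eq_or_lt with rfl | hx0
    · exact (if_pos le_rfl).trans_le (gauge_nonneg g y)
    · rw [gauge, gauge, if_neg hx0.not_ge, if_neg (hx0.trans_le hxy).not_ge]
      exact pow_le_pow_of_le_one (by norm_num) (by norm_num)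
        (level_mono g (precision_anti hx0 hxy))
  tendsto_zero := by
    have h : Tendsto (fun x => (2⁻¹ : ℝ) ^ level g (precision x)) (𝓝[>] 0) (𝓝 0) :=
      (tendsto_pow_atTop_nhds_zero_of_lt_one (by norm_num) (by norm_num)).comp
        ((tendsto_level g).comp tendsto_precision)
    refine h.congr' (eventually_nhdsWithin_of_forall fun x hx => ?_)
    simp [gauge, not_le.2 (mem_Ioi.1 hx)]

theorem gaugeFn_gauge {d : ℝ≥0∞} (hd0 : d ≠ 0) (hd : d ≠ ∞) :
    gaugeFn (gauge g) d = weight g (precision d.toReal) := by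
  rw [gaugeFn, if_neg hd, gauge, if_neg (ENNReal.toReal_pos hd0 hd).not_ge, weight,
    ENNReal.ofReal_pow (by norm_num), ENNReal.ofReal_inv_of_pos two_pos]
  simp

theorem exists_subset_cylinder_weight_le (t : Set (ℕ → Bool)) {δ : ℝ≥0∞} (hδ : δ ≠ 0) :
    ∃ x m, t ⊆ PiNat.cylinder x m ∧
      weight g m ≤ (⨆ _ : t.Nonempty, gaugeFn (gauge g) (Metric.ediam t)) + δ := by
  by_cases hd : Metric.ediam t = 0
  · -- a subsingleton lies in cylinders of every length, and long cylinders are light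
    obtain ⟨m, hm⟩ :=
      ((tendsto_weight g).eventually (gt_mem_nhds (pos_iff_ne_zero.2 hδ))).exists
    obtain ⟨x, hx⟩ : ∃ x, t ⊆ {x} := by
      rcases (Metric.ediam_eq_zero_iff.1 hd).eq_empty_or_singleton with rfl | ⟨x, rfl⟩
      exacts [⟨fun _ => false, empty_subset _⟩, ⟨x, subset_rfl⟩]
    exact ⟨x, m, hx.trans (singleton_subset_iff.2 (PiNat.self_mem_cylinder x m)),
      hm.le.trans le_add_self⟩
  · obtain ⟨x, hx⟩ : t.Nonempty :=
      nonempty_iff_ne_empty.2 (by rintro rfl; exact hd Metric.ediam_empty)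
    have hd1 : Metric.ediam t ≤ 1 := Metric.ediam_le fun y _ z _ => by
      rw [edist_dist]
      exact ENNReal.ofReal_le_one.2 (PiNat.dist_le_one y z)
    have hdtop : Metric.ediam t ≠ ∞ := ne_top_of_le_ne_top ENNReal.one_ne_top hd1
    refine ⟨x, precision (Metric.ediam t).toReal, fun y hy => ?_, ?_⟩
    · rw [PiNat.mem_cylinder_iff_dist_le, one_div]
      calc dist y x ≤ (Metric.ediam t).toReal := by
            rw [dist_edist]
            exact ENNReal.toReal_mono hdtop (Metric.edist_le_ediam_of_mem hy hx)
        _ ≤ 2⁻¹ ^ precision (Metric.ediam t).toReal :=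
            le_two_inv_pow_precision (ENNReal.toReal_pos hd hdtop)
              (ENNReal.toReal_le_of_le_ofReal zero_le_one (by simpa using hd1))
    · rw [iSup_pos ⟨x, hx⟩, gaugeFn_gauge g hd hdtop]
      exact le_self_add

theorem exists_cylinder_cover {A : Set (ℕ → Bool)} (hA : gaugeMeasure (gauge g) A = 0)
    {ε : ℝ≥0∞} (hε : ε ≠ 0) :
    ∃ (x : ℕ → ℕ → Bool) (m : ℕ → ℕ),
      A ⊆ ⋃ i, PiNat.cylinder (x i) (m i) ∧ ∑' i, weight g (m i) ≤ ε := by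
  obtain ⟨t, hAt, ht⟩ :=
    OuterMeasure.exists_cover_tsum_lt_of_mkMetric'_eq_zero hA (ENNReal.half_pos hε).ne'
  obtain ⟨δ, hδ0, hδ⟩ := ENNReal.exists_pos_sum_of_countable' (ENNReal.half_pos hε).ne' ℕ
  choose x m htm hm using fun i => exists_subset_cylinder_weight_le g (t i) (hδ0 i).ne'
  refine ⟨x, m, hAt.trans (iUnion_mono htm), ?_⟩
  calc ∑' i, weight g (m i)
      ≤ ∑' i, ((⨆ _ : (t i).Nonempty, gaugeFn (gauge g) (Metric.ediam (t i))) + δ i) :=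
        ENNReal.tsum_le_tsum hm
    _ = (∑' i, ⨆ _ : (t i).Nonempty, gaugeFn (gauge g) (Metric.ediam (t i))) + ∑' i, δ i :=
        ENNReal.tsum_add
    _ ≤ ε / 2 + ε / 2 := add_le_add ht.le hδ.le
    _ = ε := ENNReal.add_halves ε

theorem exists_frequently_mem_cylinder {A : Set (ℕ → Bool)}
    (hA : gaugeMeasure (gauge g) A = 0) :
    ∃ (x : ℕ → ℕ → Bool) (m : ℕ → ℕ), ∑' j, weight g (m j) ≤ 1 ∧ (∀ j, weight g (m j) < 1) ∧
      A ⊆ {y | ∃ᶠ j in atTop, y ∈ PiNat.cylinder (x j) (m j)} := by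
  choose x m hAx hm using fun k : ℕ =>
    exists_cylinder_cover g hA (ε := 2⁻¹ ^ (k + 1)) (by simp)
  refine ⟨fun j : ℕ => x j.unpair.1 j.unpair.2, fun j : ℕ => m j.unpair.1 j.unpair.2, ?_,
    fun j => ?_, Nat.frequently_mem_unpair_of_forall_subset_iUnion hAx⟩
  · calc ∑' j : ℕ, weight g (m j.unpair.1 j.unpair.2)
        = ∑' k, ∑' i, weight g (m k i) := by
          rw [← ENNReal.tsum_prod, ← Nat.pairEquiv.symm.tsum_eq]
          rfl
      _ ≤ ∑' k : ℕ, (2⁻¹ : ℝ≥0∞) ^ (k + 1) := ENNReal.tsum_le_tsum hm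
      _ = 1 := by
          rw [ENNReal.tsum_geometric_add_one, ENNReal.one_sub_inv_two, inv_inv,
            ENNReal.inv_mul_cancel (by norm_num) (by norm_num)]
  · calc weight g (m j.unpair.1 j.unpair.2) ≤ 2⁻¹ ^ (j.unpair.1 + 1) :=
          (ENNReal.le_tsum (f := fun i => weight g (m j.unpair.1 i)) _).trans (hm _)
      _ < 1 := pow_lt_one₀ (by norm_num) (by norm_num) (Nat.succ_ne_zero _)

theorem exists_injective_threshold_le (hg : Monotone g) {m : ℕ → ℕ}
    (hsum : ∑' j, weight g (m j) ≤ 1) (hlt : ∀ j, weight g (m j) < 1) :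
    ∃ p : ℕ → ℕ, Function.Injective p ∧ ∀ j, g (p j ^ p j) ≤ m j := by
  have hlevel : ∀ ℓ, {j | level g (m j) ≤ ℓ} ⊆ {j | 2⁻¹ ^ ℓ ≤ weight g (m j)} := fun ℓ j hj =>
    pow_le_pow_right_of_le_one' (a := (2⁻¹ : ℝ≥0∞)) (by norm_num) hj
  have hcount := ENNReal.ncard_le_two_pow_of_tsum_le_one hsum
  obtain ⟨p, hp, hpj⟩ :=
    exists_injective_lt_ncard_setOf_le _ fun ℓ => (hcount ℓ).1.subset (hlevel ℓ)
  refine ⟨p, hp, fun j => ?_⟩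
  calc g (p j ^ p j) ≤ threshold g (level g (m j)) :=
        hg (Nat.pow_self_mono ((hpj j).le.trans
          ((Set.ncard_le_ncard (hlevel _) (hcount _).1).trans (hcount _).2)))
    _ ≤ m j := threshold_level_le g (level_ne_zero_of_weight_lt_one g (hlt j))

end YoriokaGauge

/-- For every increasing `g ∈ ω^ω` there is a gauge function `f`
such that `N^f = {A ⊆ 2^ω : ℋ^f(A) = 0}` is contained in the Yorioka ideal `I_g`. -/
theorem stmt13 (g : ℕ → ℕ) (hg : StrictMono g) :
    ∃ f : ℝ → ℝ, IsGauge f ∧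
      {A : Set (ℕ → Bool) | gaugeMeasure f A = 0} ⊆ Yorioka g := by
  refine ⟨YoriokaGauge.gauge g, YoriokaGauge.isGauge_gauge g, fun A hA => ?_⟩
  obtain ⟨x, m, hsum, hlt, hAx⟩ := YoriokaGauge.exists_frequently_mem_cylinder g hA
  obtain ⟨p, hp, hpm⟩ := YoriokaGauge.exists_injective_threshold_le g hg.monotone hsum hlt
  obtain ⟨σ, hσ, hAσ⟩ :=
    exists_limsupCyl_superset_of_injective (T := fun n => g (n ^ n)) x m p hp hpm
  exact ⟨_, fastBelow_of_le hg.monotone hσ, σ, fun _ => rfl, hAx.trans hAσ⟩
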